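/- arXiv:2307.07897 — 2 statements merged into one kernel-verified Lean document; each statement's English description precedes it below -/
import Mathlib

section
/- Let $(g,\zeta,q)$ be an admissible triplet of a finite complex reflection group $G$ acting on $\mathbb{C}^n$ with degrees $d_1 \geq \dots \geq d_n$, and let $z=(z^1,\dots,z^n)$ be a $(g,\zeta)$-graded coordinate system. If $F \in S[V]^G$ is a $G$-invariant homogeneous polynomial and $a \in \mathbb{Z}_{\geq 0}^n$ satisfies $\frac{\partial^a F}{\partial z^a}(q) \neq 0$, then $\deg F \equiv a \cdot d \pmod{d_1}$, where $a \cdot d = \sum_\alpha a_\alpha d_\alpha$. -/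
open MvPolynomial Matrix

noncomputable section

variable {n : ℕ}

/-- Pullback of polynomials along the linear map with matrix `M`:
`(pback M F)(v) = F (M *ᵥ v)`.  The pullback `g^*F` of the paper is `pback (g⁻¹).val F`. -/
def pback (M : Matrix (Fin n) (Fin n) ℂ) :
    MvPolynomial (Fin n) ℂ →ₐ[ℂ] MvPolynomial (Fin n) ℂ :=
  aeval fun i => ∑ j, C (M i j) * X j

/-- Multi-index partial derivative `∂^a/∂z^a` of a polynomial (in the standard coordinates). -/
def mderiv (a : Fin n → ℕ) (F : MvPolynomial (Fin n) ℂ) : MvPolynomial (Fin n) ℂ :=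
  (List.finRange n).foldr (fun i acc => (fun p => pderiv i p)^[a i] acc) F

/-- The linear coordinate `z^α = ∑_j P_{α j} u^j` of the coordinate system given by `P`. -/
def coordPoly (P : GL (Fin n) ℂ) (α : Fin n) : MvPolynomial (Fin n) ℂ :=
  ∑ j, C (P.val α j) * X j

/-- `∂^a F/∂z^a` evaluated at `q`, where `z = P u` are the coordinates given by `P`. -/
def zderivAt (P : GL (Fin n) ℂ) (a : Fin n → ℕ) (F : MvPolynomial (Fin n) ℂ)
    (q : Fin n → ℂ) : ℂ :=
  eval (P.val *ᵥ q) (mderiv a (pback (P⁻¹).val F))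

/-- `g` is a (complex) reflection: it fixes a hyperplane pointwise and is not the identity. -/
def IsReflection (g : GL (Fin n) ℂ) : Prop :=
  g ≠ 1 ∧
    Module.finrank ℂ (LinearMap.range (Matrix.toLin' (g.val - 1))) = 1

/-- A finite complex reflection group: a finite subgroup generated by its reflections. -/
def IsReflectionGroup (G : Subgroup (GL (Fin n) ℂ)) : Prop :=
  Finite G ∧ Subgroup.closure {g | g ∈ G ∧ IsReflection g} = G

/-- A regular vector: it lies on no reflection hyperplane of `G`. -/
def IsRegularVec (G : Subgroup (GL (Fin n) ℂ)) (q : Fin n → ℂ) : Prop :=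
  q ≠ 0 ∧ ∀ g ∈ G, IsReflection g → g.val *ᵥ q ≠ q

/-- A `ζ`-regular element of `G`: its `ζ`-eigenspace contains a regular vector. -/
def IsZetaRegular (G : Subgroup (GL (Fin n) ℂ)) (g : GL (Fin n) ℂ) (ζ : ℂ) : Prop :=
  g ∈ G ∧ ∃ q, IsRegularVec G q ∧ g.val *ᵥ q = ζ • q

/-- A set of basic invariants of `G` with degrees `d`. -/
structure BasicInvariants (G : Subgroup (GL (Fin n) ℂ)) (d : Fin n → ℕ)
    (x : Fin n → MvPolynomial (Fin n) ℂ) : Prop where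
  pos : ∀ α, 0 < d α
  homog : ∀ α, (x α).IsHomogeneous (d α)
  invariant : ∀ g ∈ G, ∀ α, pback (g : GL (Fin n) ℂ).val (x α) = x α
  indep : AlgebraicIndependent ℂ x
  gen : ∀ F : MvPolynomial (Fin n) ℂ, (∀ g ∈ G, pback (g : GL (Fin n) ℂ).val F = F) →
    F ∈ Algebra.adjoin ℂ (Set.range x)

/-- An admissible triplet `(g, ζ, q)`; the degrees are arranged so that `d 0` is the highest. -/
structure AdmissibleTriplet [NeZero n] (G : Subgroup (GL (Fin n) ℂ)) (d : Fin n → ℕ)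
    (g : GL (Fin n) ℂ) (ζ : ℂ) (q : Fin n → ℂ) : Prop where
  prim : IsPrimitiveRoot ζ (d 0)
  reg : IsZetaRegular G g ζ
  regq : IsRegularVec G q
  eig : g.val *ᵥ q = ζ • q

/-- `P` gives a `(g,ζ)`-graded coordinate system: `g^* z^α = ζ^{d_α-1} z^α`. -/
def GradedCoords (g : GL (Fin n) ℂ) (ζ : ℂ) (d : Fin n → ℕ) (P : GL (Fin n) ℂ) : Prop :=
  ∀ α, pback (g⁻¹).val (coordPoly P α) = C (ζ ^ ((d α : ℤ) - 1)) * coordPoly P α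

/-- The multi-index `e_β`. -/
def unitIdx (β : Fin n) : Fin n → ℕ := fun j => if j = β then 1 else 0

/-- `x` is compatible with the coordinate system given by `P` at `q`:
`∂x^α/∂z^β (q) = δ^α_β`. -/
def Compatible (P : GL (Fin n) ℂ) (q : Fin n → ℂ)
    (x : Fin n → MvPolynomial (Fin n) ℂ) : Prop :=
  ∀ α β, zderivAt P (unitIdx β) (x α) q = if α = β then 1 else 0

/-- `x` is good: the derivatives `∂^a x^α/∂z^a` vanish at `q` for every `a ∈ I_α^{(0)}`. -/
def IsGood [NeZero n] (P : GL (Fin n) ℂ) (q : Fin n → ℂ) (d : Fin n → ℕ)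
    (x : Fin n → MvPolynomial (Fin n) ℂ) : Prop :=
  ∀ α (a : Fin n → ℕ), (∑ β, a β * d β) = d α → 2 ≤ ∑ β, a β →
    zderivAt P a (x α) q = 0

/-- Multi-index partial derivative of a function on `ℂ^n`. -/
def mpd (a : Fin n → ℕ) (f : (Fin n → ℂ) → ℂ) : (Fin n → ℂ) → ℂ :=
  (List.finRange n).foldr
    (fun i acc => (fun g v => fderiv ℂ g v (Pi.single i 1))^[a i] acc) f

/-- `f` is a rational function which is regular at `q`. -/
def RegRat (q : Fin n → ℂ) (f : (Fin n → ℂ) → ℂ) : Prop :=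
  ∃ p s : MvPolynomial (Fin n) ℂ, eval q s ≠ 0 ∧
    ∀ v, eval v s ≠ 0 → f v = eval v p / eval v s

/-- Condition `P(i)`: the value at `q` is diagonal and nonvanishing derivatives at `q`
satisfy `a·d + d_β = d_γ + k d_1` with `k ≥ i`. -/
def CondP [NeZero n] (d : Fin n → ℕ) (q : Fin n → ℂ) (i : ℕ)
    (M : Fin n → Fin n → (Fin n → ℂ) → ℂ) : Prop :=
  (∀ γ β, γ ≠ β → M γ β q = 0) ∧
    ∀ γ β (a : Fin n → ℕ), a ≠ 0 → mpd a (M γ β) q ≠ 0 →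
      ∃ k : ℕ, i ≤ k ∧ (∑ α, a α * d α) + d β = d γ + k * d 0

/-- Condition `Q(j,h)`: nonvanishing derivatives at `q` satisfy
`a·d + h + d_β = d_γ + k d_1` with `k ≥ j`. -/
def CondQ [NeZero n] (d : Fin n → ℕ) (q : Fin n → ℂ) (j h : ℕ)
    (M : Fin n → Fin n → (Fin n → ℂ) → ℂ) : Prop :=
  ∀ γ β (a : Fin n → ℕ), mpd a (M γ β) q ≠ 0 →
    ∃ k : ℕ, j ≤ k ∧ (∑ α, a α * d α) + h + d β = d γ + k * d 0

/-- Entrywise product of matrices of functions. -/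
def matMulF (Xm Ym : Fin n → Fin n → (Fin n → ℂ) → ℂ) :
    Fin n → Fin n → (Fin n → ℂ) → ℂ :=
  fun γ β v => ∑ ρ, Xm γ ρ v * Ym ρ β v

/-- The `(γ,β)` entry of the Jacobian matrix `J = (∂x^γ/∂z^β)`, expressed in the
coordinates `z = P u`, as a function on coordinate space. -/
def jacEntry (P : GL (Fin n) ℂ) (x : Fin n → MvPolynomial (Fin n) ℂ) (γ β : Fin n) :
    (Fin n → ℂ) → ℂ :=
  fun v => eval v (pderiv β (pback (P⁻¹).val (x γ)))
lemma pback_X (M : Matrix (Fin n) (Fin n) ℂ) (i : Fin n) :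
    pback M (X i) = ∑ j, C (M i j) * X j := by
  simp [pback]

lemma pback_pback (M N : Matrix (Fin n) (Fin n) ℂ) (p : MvPolynomial (Fin n) ℂ) :
    pback M (pback N p) = pback (N * M) p := by
  have h : (pback M).comp (pback N) = pback (N * M) := by
    apply MvPolynomial.algHom_ext
    intro i
    simp only [AlgHom.coe_comp, Function.comp_apply, pback_X, map_sum, _root_.map_mul]
    have hC : ∀ j, pback M (C (N i j)) = C (N i j) := fun j => by
      simp [pback]
    simp_rw [hC, Finset.mul_sum]
    rw [Finset.sum_comm]
    refine Finset.sum_congr rfl fun k _ => ?_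
    rw [Matrix.mul_apply, map_sum, Finset.sum_mul]
    exact Finset.sum_congr rfl fun j _ => by rw [C_mul, mul_assoc]
  rw [← h]; rfl

lemma pback_diagonal_monomial (c : Fin n → ℂ) (e : Fin n →₀ ℕ) (r : ℂ) :
    pback (Matrix.diagonal c) (monomial e r) = monomial e (r * ∏ j, c j ^ e j) := by
  have hX : ∀ i, (∑ j, C (Matrix.diagonal c i j) * X j : MvPolynomial (Fin n) ℂ)
      = C (c i) * X i := by
    intro i
    rw [Finset.sum_eq_single i]
    · simp [Matrix.diagonal_apply_eq]
    · intro j _ hj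
      simp [Matrix.diagonal_apply_ne' c hj]
    · simp
  rw [pback, aeval_monomial]
  simp_rw [hX]
  rw [Finsupp.prod_fintype _ _ (fun i => pow_zero _)]
  simp_rw [mul_pow, ← C_pow]
  rw [Finset.prod_mul_distrib, ← map_prod]
  rw [monomial_eq, Finsupp.prod_fintype _ _ (fun i => pow_zero _)]
  rw [algebraMap_eq, C_mul]
  ring

lemma coeff_pback_diagonal (c : Fin n → ℂ) (p : MvPolynomial (Fin n) ℂ) (e : Fin n →₀ ℕ) :
    coeff e (pback (Matrix.diagonal c) p) = (∏ j, c j ^ e j) * coeff e p := by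
  conv_lhs => rw [← p.support_sum_monomial_coeff, map_sum]
  simp_rw [pback_diagonal_monomial]
  rw [MvPolynomial.coeff_sum]
  simp_rw [coeff_monomial]
  by_cases he : e ∈ p.support
  · rw [Finset.sum_eq_single e]
    · simp [mul_comm]
    · intro b _ hb; rw [if_neg hb]
    · intro h; exact absurd he h
  · rw [Finset.sum_eq_zero]
    · have : coeff e p = 0 := by simpa using (MvPolynomial.notMem_support_iff.mp he)
      simp [this]
    · intro b hb
      have hbe : b ≠ e := fun h => he (h ▸ hb)
      rw [if_neg hbe]

lemma pderiv_iterate_monomial (i : Fin n) (k : ℕ) (e : Fin n →₀ ℕ) (r : ℂ) :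
    (fun p => pderiv i p)^[k] (monomial e r) =
      monomial (e - Finsupp.single i k) (r * (e i).descFactorial k) := by
  induction k with
  | zero => simp
  | succ k ih =>
    rw [Function.iterate_succ_apply', ih, pderiv_monomial]
    have h1 : e - Finsupp.single i k - Finsupp.single i 1 = e - Finsupp.single i (k + 1) := by
      ext j
      simp only [Finsupp.tsub_apply, Finsupp.single_apply]
      by_cases hj : i = j <;> simp [hj, Nat.sub_sub]
    have h2 : (e - Finsupp.single i k) i = e i - k := by
      simp [Finsupp.tsub_apply]
    rw [h1, h2]
    congr 1
    rw [Nat.descFactorial_succ, mul_assoc]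
    push_cast
    ring

lemma foldr_mderiv_monomial (l : List (Fin n)) (hl : l.Nodup) (a : Fin n → ℕ)
    (e : Fin n →₀ ℕ) (r : ℂ) :
    l.foldr (fun i acc => (fun p => pderiv i p)^[a i] acc) (monomial e r) =
      monomial (e - ∑ i ∈ l.toFinset, Finsupp.single i (a i))
        (r * ∏ i ∈ l.toFinset, ((e i).descFactorial (a i))) := by
  induction l with
  | nil => simp
  | cons i l ih =>
    have hnd := List.nodup_cons.mp hl
    rw [List.foldr_cons, ih hnd.2, pderiv_iterate_monomial]
    have hit : (i :: l).toFinset = insert i l.toFinset := by simp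
    have hi : i ∉ l.toFinset := by simpa using hnd.1
    have hS : (e - ∑ j ∈ l.toFinset, Finsupp.single j (a j)) i = e i := by
      rw [Finsupp.tsub_apply]
      rw [Finset.sum_apply']
      rw [Finset.sum_eq_zero]
      · simp
      · intro j hj
        exact Finsupp.single_eq_of_ne (fun h => hi (h ▸ hj))
    rw [hS, hit, Finset.sum_insert hi, Finset.prod_insert hi]
    have h3 : e - ∑ j ∈ l.toFinset, Finsupp.single j (a j) - Finsupp.single i (a i)
        = e - (Finsupp.single i (a i) + ∑ j ∈ l.toFinset, Finsupp.single j (a j)) := by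
      ext j
      simp only [Finsupp.coe_tsub, Pi.sub_apply, Finsupp.coe_add, Pi.add_apply]
      omega
    rw [h3]
    congr 1
    push_cast; ring

lemma mderiv_monomial (a : Fin n → ℕ) (e : Fin n →₀ ℕ) (r : ℂ) :
    mderiv a (monomial e r) =
      monomial (e - ∑ i, Finsupp.single i (a i))
        (r * ∏ i, ((e i).descFactorial (a i))) := by
  rw [mderiv, foldr_mderiv_monomial _ (List.nodup_finRange n), List.toFinset_finRange]

lemma mderiv_add (a : Fin n → ℕ) (p q : MvPolynomial (Fin n) ℂ) :
    mderiv a (p + q) = mderiv a p + mderiv a q := by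
  rw [mderiv, mderiv, mderiv]
  induction List.finRange n generalizing p q with
  | nil => simp
  | cons i l ih =>
    rw [List.foldr_cons, List.foldr_cons, List.foldr_cons, ih]
    generalize l.foldr (fun i acc => (fun p => pderiv i p)^[a i] acc) p = P
    generalize l.foldr (fun i acc => (fun p => pderiv i p)^[a i] acc) q = Q
    induction a i with
    | zero => simp
    | succ k ihk =>
      rw [Function.iterate_succ_apply', Function.iterate_succ_apply',
        Function.iterate_succ_apply', ihk, map_add]

lemma mderiv_sum {ι : Type*} (a : Fin n → ℕ) (s : Finset ι) (f : ι → MvPolynomial (Fin n) ℂ) :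
    mderiv a (∑ i ∈ s, f i) = ∑ i ∈ s, mderiv a (f i) := by
  classical
  induction s using Finset.induction with
  | empty =>
    have h0 : mderiv a 0 = 0 := by
      have h := mderiv_add a 0 0
      rw [add_zero] at h
      exact left_eq_add.mp h
    simp only [Finset.sum_empty]
    exact h0
  | @insert _ _ hi ih =>
    rw [Finset.sum_insert hi, Finset.sum_insert hi, mderiv_add, ih]

lemma zpow_sum_helper {ζ : ℂ} (hζ : ζ ≠ 0) (s : Finset (Fin n)) (f : Fin n → ℤ) :
    ∏ j ∈ s, ζ ^ (f j) = ζ ^ (∑ j ∈ s, f j) := by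
  classical
  induction s using Finset.induction with
  | empty => simp
  | @insert _ _ hi ih =>
    rw [Finset.prod_insert hi, Finset.sum_insert hi, ih, zpow_add₀ hζ]

lemma sumA_apply (a : Fin n → ℕ) (j : Fin n) :
    (∑ i : Fin n, Finsupp.single i (a i)) j = a j := by
  rw [Finset.sum_apply']
  rw [Finset.sum_eq_single j]
  · simp
  · intro b _ hb; exact Finsupp.single_eq_of_ne' hb
  · simp

lemma coeff_linear (b : Fin n → ℂ) (k : Fin n) :
    coeff (Finsupp.single k 1) (∑ j, C (b j) * X j) = b k := by
  rw [MvPolynomial.coeff_sum]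
  rw [Finset.sum_eq_single k]
  · simp [coeff_C_mul, MvPolynomial.coeff_X]
  · intro j _ hj
    rw [coeff_C_mul, MvPolynomial.coeff_X', if_neg, mul_zero]
    intro h
    exact hj (by simpa using (Finsupp.single_left_injective one_ne_zero h : j = k))
  · simp

theorem stmt_3 [NeZero n] (G : Subgroup (GL (Fin n) ℂ)) (hG : IsReflectionGroup G)
    (d : Fin n → ℕ) (hd : Antitone d)
    (x : Fin n → MvPolynomial (Fin n) ℂ) (hx : BasicInvariants G d x)
    (g : GL (Fin n) ℂ) (ζ : ℂ) (q : Fin n → ℂ) (hT : AdmissibleTriplet G d g ζ q)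
    (P : GL (Fin n) ℂ) (hP : GradedCoords g ζ d P)
    (F : MvPolynomial (Fin n) ℂ) (N : ℕ) (hF : F.IsHomogeneous N)
    (hFinv : ∀ h ∈ G, pback (h : GL (Fin n) ℂ).val F = F)
    (a : Fin n → ℕ) (ha : zderivAt P a F q ≠ 0) :
    Int.ModEq (d 0 : ℤ) (N : ℤ) (∑ α, (a α : ℤ) * (d α : ℤ)) := by
  classical
  have hd0 : 0 < d 0 := hx.pos 0
  have hζp : IsPrimitiveRoot ζ (d 0) := hT.prim
  have hζ0 : ζ ≠ 0 := hζp.ne_zero hd0.ne'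
  have ha' : eval (P.val *ᵥ q) (mderiv a (pback (P⁻¹).val F)) ≠ 0 := ha
  set c : Fin n → ℂ := fun α => ζ ^ ((d α : ℤ) - 1) with hc
  set Ft := pback (P⁻¹).val F with hFt
  set qt := P.val *ᵥ q with hqt
  -- the matrix identity P g⁻¹ = diag(c) P
  have hM : P.val * (g⁻¹).val = Matrix.diagonal c * P.val := by
    ext α k
    have h1 := hP α
    rw [coordPoly] at h1
    rw [show (∑ j, C (P.val α j) * X j : MvPolynomial (Fin n) ℂ) = pback P.val (X α) from
      (pback_X P.val α).symm, pback_pback, pback_X] at h1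
    have h3 := congrArg (coeff (Finsupp.single k 1)) h1
    rw [coeff_linear, coeff_C_mul, pback_X, coeff_linear] at h3
    rw [h3]
    simp [Matrix.diagonal_mul, Matrix.mul_apply, Matrix.diagonal_apply, Finset.sum_ite_eq]
    exact Or.inl rfl
  have hPinvP : (P⁻¹).val * P.val = 1 := P.inv_mul
  have hPPinv : P.val * (P⁻¹).val = 1 := P.mul_inv
  have hMat2 : (g⁻¹).val * (P⁻¹).val = (P⁻¹).val * Matrix.diagonal c := by
    have h1 : (P⁻¹).val * (P.val * (g⁻¹).val) = (P⁻¹).val * (Matrix.diagonal c * P.val) := by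
      rw [hM]
    rw [← mul_assoc, ← mul_assoc, hPinvP, one_mul] at h1
    rw [h1, mul_assoc, hPPinv, mul_one]
  -- invariance of Ft under the diagonal action
  have hinvFt : pback (Matrix.diagonal c) Ft = Ft := by
    rw [hFt, pback_pback, ← hMat2, ← pback_pback, hFinv _ (inv_mem hT.reg.1)]
  -- homogeneity of Ft
  have hFth : Ft.IsHomogeneous N := by
    have h := hF.aeval (fun i => ∑ j, C ((P⁻¹).val i j) * X j)
      (fun i => MvPolynomial.IsHomogeneous.sum _ _ _
        (fun j _ => (isHomogeneous_X ℂ j).C_mul _))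
    rw [one_mul] at h
    exact h
  -- eigenvector properties
  have hginvq : (g⁻¹).val *ᵥ q = ζ⁻¹ • q := by
    have h1 : (g⁻¹).val *ᵥ (g.val *ᵥ q) = q := by
      rw [Matrix.mulVec_mulVec, g.inv_mul, Matrix.one_mulVec]
    rw [hT.eig, Matrix.mulVec_smul] at h1
    calc (g⁻¹).val *ᵥ q = ζ⁻¹ • (ζ • ((g⁻¹).val *ᵥ q)) := by
          rw [smul_smul, inv_mul_cancel₀ hζ0, one_smul]
      _ = ζ⁻¹ • q := by rw [h1]
  have hqdvd : ∀ j, qt j ≠ 0 → (d 0 : ℤ) ∣ (d j : ℤ) := by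
    intro j hj
    have h1 : Matrix.diagonal c *ᵥ qt = ζ⁻¹ • qt := by
      rw [hqt, Matrix.mulVec_mulVec, ← hM, ← Matrix.mulVec_mulVec, hginvq, Matrix.mulVec_smul]
    have h2 : c j * qt j = ζ⁻¹ * qt j := by
      simpa [Matrix.mulVec_diagonal] using congrFun h1 j
    have h3 : c j = ζ⁻¹ := mul_right_cancel₀ hj h2
    have h4 : ζ ^ (d j : ℤ) = 1 := by
      calc ζ ^ (d j : ℤ) = ζ ^ ((d j : ℤ) - 1) * ζ ^ (1 : ℤ) := by
            rw [← zpow_add₀ hζ0]; norm_num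
        _ = ζ⁻¹ * ζ := by rw [zpow_one]; exact congrArg (· * ζ) h3
        _ = 1 := inv_mul_cancel₀ hζ0
    exact (hζp.zpow_eq_one_iff_dvd _).mp h4
  -- expand the derivative over monomials of Ft
  have hexp : mderiv a Ft = ∑ e ∈ Ft.support, mderiv a (monomial e (coeff e Ft)) := by
    conv_lhs => rw [← Ft.support_sum_monomial_coeff]
    rw [mderiv_sum]
  rw [hexp, map_sum] at ha'
  obtain ⟨e, hesupp, hne⟩ := Finset.exists_ne_zero_of_sum_ne_zero ha'
  rw [mderiv_monomial, eval_monomial] at hne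
  have hcoeff : coeff e Ft ≠ 0 := MvPolynomial.mem_support_iff.mp hesupp
  rw [Finsupp.prod_fintype _ _ (fun i => pow_zero _)] at hne
  have h1 := mul_ne_zero_iff.mp hne
  have h2 := mul_ne_zero_iff.mp h1.1
  have hle : ∀ j, a j ≤ e j := by
    intro j
    by_contra hlt
    push_neg at hlt
    apply h2.2
    norm_cast
    exact Finset.prod_eq_zero (Finset.mem_univ j)
      (Nat.descFactorial_eq_zero_iff_lt.mpr hlt)
  have hsubA : ∀ j, (e - ∑ i, Finsupp.single i (a i)) j = e j - a j := by
    intro j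
    rw [Finsupp.tsub_apply, sumA_apply]
  have hq0 : ∀ j, qt j = 0 → e j = a j := by
    intro j hqj
    by_contra hne3
    apply h1.2
    refine Finset.prod_eq_zero (Finset.mem_univ j) ?_
    rw [hqj, hsubA]
    apply zero_pow
    have := hle j
    omega
  -- homogeneity: total degree of e is N
  have hsum : ∑ j, e j = N := by
    have h := hFth hcoeff
    rw [Finsupp.weight_apply] at h
    rw [← h, Finsupp.sum]
    rw [Finset.sum_subset (Finset.subset_univ e.support)
      (fun x _ hx => by simpa using Finsupp.notMem_support_iff.mp hx)]
    simp
  -- invariance: the weighted degree of e is divisible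
  have hprod1 : ∏ j, c j ^ e j = 1 := by
    have h := congrArg (coeff e) hinvFt
    rw [coeff_pback_diagonal] at h
    exact mul_right_cancel₀ hcoeff (h.trans (one_mul _).symm)
  have hdiv1 : (d 0 : ℤ) ∣ (∑ j, ((d j : ℤ) - 1) * (e j : ℤ)) := by
    rw [← hζp.zpow_eq_one_iff_dvd, ← zpow_sum_helper hζ0, ← hprod1]
    refine Finset.prod_congr rfl fun j _ => ?_
    simp only [hc]
    rw [_root_.zpow_mul, zpow_natCast]
  -- final arithmetic
  have hNe : (N : ℤ) = ∑ j, (e j : ℤ) := by rw [← hsum]; push_cast; rfl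
  have key1 : (d 0 : ℤ) ∣ (∑ j, (e j : ℤ) * (d j : ℤ)) - (N : ℤ) := by
    have heq : (∑ j, ((d j : ℤ) - 1) * (e j : ℤ))
        = (∑ j, (e j : ℤ) * (d j : ℤ)) - ∑ j, (e j : ℤ) := by
      rw [← Finset.sum_sub_distrib]
      exact Finset.sum_congr rfl fun j _ => by ring
    rw [hNe, ← heq]
    exact hdiv1
  have key2 : (d 0 : ℤ) ∣ (∑ j, (e j : ℤ) * (d j : ℤ)) - ∑ j, (a j : ℤ) * (d j : ℤ) := by
    rw [← Finset.sum_sub_distrib]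
    refine Finset.dvd_sum fun j _ => ?_
    by_cases hqj : qt j = 0
    · rw [hq0 j hqj]; simp
    · have hdj := hqdvd j hqj
      have heq2 : (e j : ℤ) * (d j : ℤ) - (a j : ℤ) * (d j : ℤ)
          = ((e j : ℤ) - (a j : ℤ)) * (d j : ℤ) := by ring
      rw [heq2]
      exact Dvd.dvd.mul_left hdj _
  rw [Int.modEq_iff_dvd]
  have hfin : (∑ α, (a α : ℤ) * (d α : ℤ)) - (N : ℤ)
      = ((∑ j, (e j : ℤ) * (d j : ℤ)) - (N : ℤ))
        - ((∑ j, (e j : ℤ) * (d j : ℤ)) - ∑ j, (a j : ℤ) * (d j : ℤ)) := by ring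
  rw [hfin]
  exact dvd_sub key1 key2

end
end

section
/- Let $(g,\zeta,q)$ be an admissible triplet of a finite complex reflection group $G$ and $z$ a $(g,\zeta)$-graded coordinate system. Then for any set of basic invariants $x=(x^1,\dots,x^n)$ of $G$ with $\deg x^\alpha = d_\alpha$, if $d_\alpha < d_1$ then $x^\alpha(q) = 0$. -/
open MvPolynomial Matrix

noncomputable section

variable {n : ℕ}

lemma eval_pback' (M : Matrix (Fin n) (Fin n) ℂ) (F : MvPolynomial (Fin n) ℂ)
    (v : Fin n → ℂ) :
    eval v (pback M F) = eval (M *ᵥ v) F := by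
  unfold pback
  induction F using MvPolynomial.induction_on with
  | C a => simp
  | add p q hp hq => rw [_root_.map_add, _root_.map_add, _root_.map_add, hp, hq]
  | mul_X p i hp =>
      rw [_root_.map_mul, _root_.map_mul, _root_.map_mul, hp, aeval_X, eval_X]
      congr 1
      simp [mulVec, dotProduct]

lemma eval_smul_homog {m : ℕ} {F : MvPolynomial (Fin n) ℂ} (hF : F.IsHomogeneous m)
    (c : ℂ) (v : Fin n → ℂ) : eval (c • v) F = c ^ m * eval v F := by
  rw [eval_eq, eval_eq, Finset.mul_sum]
  apply Finset.sum_congr rfl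
  intro e he
  have hdeg : ∑ i ∈ e.support, e i = m := by
    have := hF (mem_support_iff.mp he)
    simpa [Finsupp.weight, Finsupp.linearCombination, Finsupp.sum] using this
  calc MvPolynomial.coeff e F * ∏ i ∈ e.support, (c • v) i ^ e i
      = MvPolynomial.coeff e F * ((∏ i ∈ e.support, c ^ e i) * ∏ i ∈ e.support, v i ^ e i) := by
        rw [← Finset.prod_mul_distrib]; simp [mul_pow]
    _ = c ^ m * (MvPolynomial.coeff e F * ∏ i ∈ e.support, v i ^ e i) := by
        rw [Finset.prod_pow_eq_pow_sum, hdeg]; ring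

theorem stmt_4 [NeZero n] (G : Subgroup (GL (Fin n) ℂ)) (hG : IsReflectionGroup G)
    (d : Fin n → ℕ) (hd : Antitone d)
    (x : Fin n → MvPolynomial (Fin n) ℂ) (hx : BasicInvariants G d x)
    (g : GL (Fin n) ℂ) (ζ : ℂ) (q : Fin n → ℂ) (hT : AdmissibleTriplet G d g ζ q)
    (P : GL (Fin n) ℂ) (hP : GradedCoords g ζ d P)
    (α : Fin n) (hα : d α < d 0) :
    eval q (x α) = 0 := by
  have hinv := hx.invariant g hT.reg.1 α
  have h1 : eval q (x α) = ζ ^ d α * eval q (x α) := by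
    conv_lhs => rw [← hinv]
    rw [eval_pback', hT.eig, eval_smul_homog (hx.homog α)]
  have hz : ζ ^ d α ≠ 1 :=
    hT.prim.pow_ne_one_of_pos_of_lt (hx.pos α).ne' hα
  have := sub_eq_zero.mpr h1.symm
  rw [← sub_one_mul] at this
  rcases mul_eq_zero.mp this with h | h
  · exact absurd (by linear_combination h) hz
  · exact h

end
end
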